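/- arXiv:1110.0566 — 2 statements merged into one kernel-verified Lean document; each statement's English description precedes it below -/
import Mathlib

section
/- Let n ≥ 1 and let U(sp(2n,C)) be the universal enveloping algebra. Let M̂₊ be the determinant of the n×n matrix whose (i,j) entry is the element e_{i,n+j} + e_{j,n+i} of sp(2n,C) (all these entries commute in U(sp(2n,C)) since they span an abelian subalgebra). Then for every X ∈ gl(n,C), the element H_X = (X 0; 0 −Xᵀ) ∈ sp(2n,C) satisfies H_X · M̂₊ − M̂₊ · H_X = 2·Tr(X) · M̂₊ in U(sp(2n,C)). -/
open Matrix

set_option synthInstance.maxHeartbeats 400000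
set_option maxHeartbeats 1600000

attribute [local instance 100] LieRing.ofAssociativeRing

noncomputable section

/-- The standard symplectic form matrix `J = (0 I; -I 0)`. -/
def Jmat (n : ℕ) : Matrix (Fin n ⊕ Fin n) (Fin n ⊕ Fin n) ℂ :=
  Matrix.fromBlocks 0 1 (-1) 0

/-- The symplectic Lie algebra `sp(2n, ℂ)`, realized as matrices `X` with
`Xᵀ J + J X = 0`, i.e. skew-adjoint matrices with respect to `Jmat n`. -/
def sp (n : ℕ) : LieSubalgebra ℂ (Matrix (Fin n ⊕ Fin n) (Fin n ⊕ Fin n) ℂ) :=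
  skewAdjointMatricesLieSubalgebra (Jmat n)

lemma mem_sp {n : ℕ} {A : Matrix (Fin n ⊕ Fin n) (Fin n ⊕ Fin n) ℂ}
    (h : Aᵀ * Jmat n = Jmat n * (-A)) : A ∈ sp n :=
  (mem_skewAdjointMatricesSubmodule _ _).2 h

/-- Block matrices `(X 0; 0 -Xᵀ)` lie in `sp(2n,ℂ)`. -/
lemma memH {n : ℕ} (X : Matrix (Fin n) (Fin n) ℂ) :
    Matrix.fromBlocks X 0 0 (-Xᵀ) ∈ sp n := by
  apply mem_sp
  simp [Jmat, Matrix.fromBlocks_transpose, Matrix.fromBlocks_multiply, Matrix.fromBlocks_neg]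

/-- Block matrices `(0 B; 0 0)` with `B` symmetric lie in `sp(2n,ℂ)`. -/
lemma memB {n : ℕ} (B : Matrix (Fin n) (Fin n) ℂ) (hB : Bᵀ = B) :
    Matrix.fromBlocks 0 B 0 0 ∈ sp n := by
  apply mem_sp
  simp [Jmat, Matrix.fromBlocks_transpose, Matrix.fromBlocks_multiply, Matrix.fromBlocks_neg, hB]

lemma symm_entry {n : ℕ} (i j : Fin n) :
    (Matrix.single i j (1:ℂ) + Matrix.single j i 1)ᵀ
      = Matrix.single i j 1 + Matrix.single j i 1 := by
  rw [Matrix.transpose_add, Matrix.transpose_single, Matrix.transpose_single, add_comm]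

/-- The element `X_{ij} = e_{i,n+j} + e_{j,n+i}` of `sp(2n,ℂ)`. -/
def Xij {n : ℕ} (i j : Fin n) : sp n :=
  ⟨Matrix.fromBlocks 0 (Matrix.single i j 1 + Matrix.single j i 1) 0 0,
    memB _ (symm_entry i j)⟩

/-- The canonical embedding of `sp(2n,ℂ)` into its universal enveloping algebra. -/
def ι {n : ℕ} : sp n →ₗ⁅ℂ⁆ UniversalEnvelopingAlgebra ℂ (sp n) :=
  UniversalEnvelopingAlgebra.ι ℂ

/-- The determinant raising element `M̂₊ = det(X_{ij}) ∈ U(sp(2n,ℂ))`, defined as the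
usual alternating sum over permutations (all entries `X_{ij}` commute). -/
def Mplus (n : ℕ) : UniversalEnvelopingAlgebra ℂ (sp n) :=
  ∑ σ : Equiv.Perm (Fin n),
    ((Equiv.Perm.sign σ : ℤ) : ℂ) • ((List.ofFn fun i : Fin n => ι (Xij (σ i) i)).prod)

/-- The element `H_X = (X 0; 0 -Xᵀ)` of `sp(2n,ℂ)`, for `X ∈ gl(n,ℂ)`. -/
def Hgl {n : ℕ} (X : Matrix (Fin n) (Fin n) ℂ) : sp n :=
  ⟨Matrix.fromBlocks X 0 0 (-Xᵀ), memH X⟩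

-- generic (already verified) --
lemma uea_deriv_prod {A : Type*} [CommRing A] [Algebra ℂ A]
    (d : Derivation ℂ A A) {ι : Type*} [DecidableEq ι] (s : Finset ι) (f : ι → A) :
    d (∏ i ∈ s, f i) = ∑ i ∈ s, (∏ j ∈ s.erase i, f j) * d (f i) := by
  induction s using Finset.induction_on with
  | empty => simp
  | @insert a s ha ih =>
    rw [Finset.prod_insert ha, Derivation.leibniz, smul_eq_mul, smul_eq_mul, ih,
      Finset.sum_insert ha, Finset.erase_insert ha, Finset.mul_sum]
    have h : ∀ i ∈ s, (∏ j ∈ (insert a s).erase i, f j) * d (f i)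
        = f a * ((∏ j ∈ s.erase i, f j) * d (f i)) := by
      intro i hi
      have hai : a ≠ i := fun h => ha (h ▸ hi)
      rw [Finset.erase_insert_of_ne hai,
        Finset.prod_insert (fun h => ha (Finset.mem_of_mem_erase h)), mul_assoc]
    rw [Finset.sum_congr rfl h]
    ring

lemma det_deriv {A : Type*} [CommRing A] [Algebra ℂ A] {m : ℕ}
    (d : Derivation ℂ A A) (M : Matrix (Fin m) (Fin m) A) :
    d M.det = ∑ c : Fin m, (M.updateCol c fun k => d (M k c)).det := by
  rw [det_apply, map_sum]
  have h1 : ∀ σ : Equiv.Perm (Fin m),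
      d (Equiv.Perm.sign σ • ∏ i, M (σ i) i)
        = ∑ c : Fin m, Equiv.Perm.sign σ •
            ((∏ j ∈ Finset.univ.erase c, M (σ j) j) * d (M (σ c) c)) := by
    intro σ
    rw [Units.smul_def, ← Int.cast_smul_eq_zsmul ℂ, d.map_smul, uea_deriv_prod d _ _,
      Finset.smul_sum]
    refine Finset.sum_congr rfl fun c _ => ?_
    rw [Units.smul_def, ← Int.cast_smul_eq_zsmul ℂ]
  rw [Finset.sum_congr rfl fun σ _ => h1 σ, Finset.sum_comm]
  refine Finset.sum_congr rfl fun c _ => ?_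
  rw [det_apply]
  refine Finset.sum_congr rfl fun σ _ => ?_
  congr 1
  rw [← Finset.mul_prod_erase Finset.univ _ (Finset.mem_univ c), Matrix.updateCol_self,
    Finset.prod_congr rfl fun j hj => Matrix.updateCol_ne (Finset.ne_of_mem_erase hj)]
  ring

-- specific setup --

def genSet (n : ℕ) : Set (UniversalEnvelopingAlgebra ℂ (sp n)) :=
  Set.range fun p : Fin n × Fin n => ι (Xij p.1 p.2)

lemma bracket_Xij_Xij {n : ℕ} (p q : Fin n × Fin n) :
    ⁅Xij p.1 p.2, Xij q.1 q.2⁆ = 0 := by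
  apply Subtype.ext
  rw [LieSubalgebra.coe_bracket, Ring.lie_def]
  simp [Xij, Matrix.fromBlocks_multiply]

lemma comm_gen {n : ℕ} : ∀ a ∈ genSet n, ∀ b ∈ genSet n, a * b = b * a := by
  rintro _ ⟨p, rfl⟩ _ ⟨q, rfl⟩
  have h := ι.map_lie (Xij p.1 p.2) (Xij q.1 q.2)
  rw [bracket_Xij_Xij, map_zero, Ring.lie_def] at h
  exact (sub_eq_zero.mp h.symm)

instance commAdj (n : ℕ) : CommRing (Algebra.adjoin ℂ (genSet n)) :=
  Algebra.adjoinCommRingOfComm ℂ comm_gen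

def phi0 (n : ℕ) : MvPolynomial (Fin n × Fin n) ℂ →ₐ[ℂ] Algebra.adjoin ℂ (genSet n) :=
  MvPolynomial.aeval fun p => ⟨ι (Xij p.1 p.2), Algebra.subset_adjoin ⟨p, rfl⟩⟩

def phi (n : ℕ) : MvPolynomial (Fin n × Fin n) ℂ →ₐ[ℂ] UniversalEnvelopingAlgebra ℂ (sp n) :=
  (Algebra.adjoin ℂ (genSet n)).val.comp (phi0 n)

lemma phi_X {n : ℕ} (p : Fin n × Fin n) : phi n (MvPolynomial.X p) = ι (Xij p.1 p.2) := by
  simp [phi, phi0]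

/-- matrix of polynomial variables -/
def Vm (n : ℕ) : Matrix (Fin n) (Fin n) (MvPolynomial (Fin n × Fin n) ℂ) :=
  Matrix.of fun i j => MvPolynomial.X (i, j)

def dY {n : ℕ} (Y : Matrix (Fin n) (Fin n) ℂ) :
    Derivation ℂ (MvPolynomial (Fin n × Fin n) ℂ) (MvPolynomial (Fin n × Fin n) ℂ) :=
  MvPolynomial.mkDerivation ℂ fun p =>
    ∑ k : Fin n, (MvPolynomial.C (Y k p.1) * MvPolynomial.X (k, p.2)
        + MvPolynomial.C (Y k p.2) * MvPolynomial.X (p.1, k))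

lemma phi_Mplus (n : ℕ) : phi n (Vm n).det = Mplus n := by
  rw [det_apply, map_sum, Mplus]
  refine Finset.sum_congr rfl fun σ _ => ?_
  rw [Units.smul_def, ← Int.cast_smul_eq_zsmul ℂ, _root_.map_smul]
  congr 1
  rw [← List.prod_ofFn (f := fun i => Vm n (σ i) i), map_list_prod (phi n), List.map_ofFn]
  exact congrArg List.prod (congrArg List.ofFn (funext fun i => phi_X _))

lemma det_dY {n : ℕ} (Y : Matrix (Fin n) (Fin n) ℂ) :
    dY Y (Vm n).det = (2 * Y.trace) • (Vm n).det := by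
  set Yc := Y.map (MvPolynomial.C (σ := Fin n × Fin n)) with hYc
  have hdV : ∀ i j, dY Y (Vm n i j) = (Ycᵀ * Vm n + Vm n * Yc) i j := by
    intro i j
    simp only [dY, Vm, Matrix.of_apply, MvPolynomial.mkDerivation_X, Matrix.add_apply,
      Matrix.mul_apply, Matrix.transpose_apply, Matrix.map_apply, hYc,
      Finset.sum_add_distrib]
    congr 1
    exact Finset.sum_congr rfl fun k _ => mul_comm _ _
  rw [det_deriv]
  have h2 : ∀ c, ((Vm n).updateCol c fun k => dY Y (Vm n k c)).det
      = (adjugate (Vm n) * (Ycᵀ * Vm n + Vm n * Yc)) c c := by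
    intro c
    rw [← cramer_apply, cramer_eq_adjugate_mulVec]
    simp only [mulVec, dotProduct, Matrix.mul_apply, hdV]
  rw [Finset.sum_congr rfl fun c _ => h2 c]
  have h3 : ∑ c, (adjugate (Vm n) * (Ycᵀ * Vm n + Vm n * Yc)) c c
      = Matrix.trace (adjugate (Vm n) * (Ycᵀ * Vm n + Vm n * Yc)) := by
    simp [Matrix.trace, Matrix.diag]
  have htr : Matrix.trace Yc = MvPolynomial.C Y.trace := by
    simp [hYc, Matrix.trace, Matrix.diag, Matrix.map_apply, ← map_sum]
  rw [h3, mul_add, Matrix.trace_add]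
  have e1 : Matrix.trace (adjugate (Vm n) * (Ycᵀ * Vm n))
      = (Vm n).det * MvPolynomial.C Y.trace := by
    rw [Matrix.trace_mul_comm, mul_assoc, Matrix.mul_adjugate, Matrix.mul_smul,
      mul_one, Matrix.trace_smul, Matrix.trace_transpose, htr, smul_eq_mul]
  have e2 : Matrix.trace (adjugate (Vm n) * (Vm n * Yc))
      = (Vm n).det * MvPolynomial.C Y.trace := by
    rw [← mul_assoc, Matrix.adjugate_mul, Matrix.smul_mul, one_mul, Matrix.trace_smul,
      htr, smul_eq_mul]
  rw [e1, e2, MvPolynomial.smul_eq_C_mul, _root_.map_mul, map_ofNat]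
  ring

-- bracket computation --

lemma lie_block {n : ℕ} (Y B : Matrix (Fin n) (Fin n) ℂ) :
    ⁅(fromBlocks Y 0 0 (-Yᵀ) : Matrix (Fin n ⊕ Fin n) (Fin n ⊕ Fin n) ℂ),
        (fromBlocks 0 B 0 0 : Matrix (Fin n ⊕ Fin n) (Fin n ⊕ Fin n) ℂ)⁆
      = fromBlocks 0 (Y * B + B * Yᵀ) 0 0 := by
  rw [Ring.lie_def]
  simp [Matrix.fromBlocks_multiply, Matrix.mul_neg, sub_eq_add_neg,
    Matrix.fromBlocks_neg, Matrix.fromBlocks_add]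

lemma hL {n : ℕ} (Y : Matrix (Fin n) (Fin n) ℂ) (i j : Fin n) :
    Y * single i j (1:ℂ) = ∑ k : Fin n, Y k i • single k j 1 := by
  ext a b
  simp [Matrix.mul_apply, Matrix.sum_apply, Matrix.single, ite_and,
    mul_ite, ite_mul, Finset.sum_ite_eq, Finset.sum_ite_eq']

lemma hR {n : ℕ} (Y : Matrix (Fin n) (Fin n) ℂ) (i j : Fin n) :
    single i j (1:ℂ) * Yᵀ = ∑ k : Fin n, Y k j • single i k 1 := by
  ext a b
  simp [Matrix.mul_apply, Matrix.sum_apply, Matrix.single, ite_and,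
    mul_ite, ite_mul, Finset.sum_ite_eq, Finset.sum_ite_eq']

lemma S_identity {n : ℕ} (Y : Matrix (Fin n) (Fin n) ℂ) (i j : Fin n) :
    Y * (single i j 1 + single j i 1)
      + (single i j 1 + single j i 1) * Yᵀ
      = ∑ k : Fin n, (Y k i • (single k j 1 + single j k 1)
            + Y k j • (single i k 1 + single k i 1)) := by
  rw [mul_add, add_mul, hL Y i j, hL Y j i, hR Y i j, hR Y j i,
    ← Finset.sum_add_distrib, ← Finset.sum_add_distrib, ← Finset.sum_add_distrib]
  refine Finset.sum_congr rfl fun k _ => ?_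
  rw [smul_add, smul_add]
  abel

lemma sum_fromBlocks {n : ℕ} {ι : Type*} (s : Finset ι) (f : ι → Matrix (Fin n) (Fin n) ℂ) :
    ∑ k ∈ s, (fromBlocks 0 (f k) 0 0 : Matrix (Fin n ⊕ Fin n) (Fin n ⊕ Fin n) ℂ)
      = fromBlocks 0 (∑ k ∈ s, f k) 0 0 := by
  classical
  induction s using Finset.induction_on with
  | empty => simp
  | @insert a s ha ih => rw [Finset.sum_insert ha, Finset.sum_insert ha, ih,
      Matrix.fromBlocks_add]; simp

lemma bracket_Hgl_Xij {n : ℕ} (Y : Matrix (Fin n) (Fin n) ℂ) (i j : Fin n) :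
    ⁅Hgl Y, Xij i j⁆ = ∑ k : Fin n, (Y k i • Xij k j + Y k j • Xij i k) := by
  apply Subtype.ext
  rw [LieSubalgebra.coe_bracket]
  have hsum : ((∑ k : Fin n, (Y k i • Xij k j + Y k j • Xij i k) : sp n)
        : Matrix (Fin n ⊕ Fin n) (Fin n ⊕ Fin n) ℂ)
      = ∑ k : Fin n, (Y k i • (Xij k j : Matrix (Fin n ⊕ Fin n) (Fin n ⊕ Fin n) ℂ)
          + Y k j • (Xij i k : Matrix (Fin n ⊕ Fin n) (Fin n ⊕ Fin n) ℂ)) := by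
    rw [AddSubmonoidClass.coe_finset_sum]
    exact Finset.sum_congr rfl fun k _ => rfl
  rw [hsum]
  show ⁅(fromBlocks Y 0 0 (-Yᵀ) : Matrix (Fin n ⊕ Fin n) (Fin n ⊕ Fin n) ℂ), fromBlocks 0 _ 0 0⁆ = _
  rw [lie_block, S_identity]
  rw [← sum_fromBlocks]
  refine Finset.sum_congr rfl fun k _ => ?_
  show _ = Y k i • (fromBlocks 0 _ 0 0 : Matrix (Fin n ⊕ Fin n) (Fin n ⊕ Fin n) ℂ)
      + Y k j • (fromBlocks 0 _ 0 0 : Matrix (Fin n ⊕ Fin n) (Fin n ⊕ Fin n) ℂ)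
  rw [Matrix.fromBlocks_smul, Matrix.fromBlocks_smul, Matrix.fromBlocks_add]
  simp


lemma phi_C {n : ℕ} (a : ℂ) :
    phi n (MvPolynomial.C a) = algebraMap ℂ (UniversalEnvelopingAlgebra ℂ (sp n)) a := by
  rw [← MvPolynomial.algebraMap_eq]
  exact (phi n).commutes a

lemma phi_base {n : ℕ} (Y : Matrix (Fin n) (Fin n) ℂ) (s : Fin n × Fin n) :
    ι (Hgl Y) * phi n (MvPolynomial.X s) - phi n (MvPolynomial.X s) * ι (Hgl Y)
      = phi n (dY Y (MvPolynomial.X s)) := by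
  rw [phi_X]
  have h1 : ι (Hgl Y) * ι (Xij s.1 s.2) - ι (Xij s.1 s.2) * ι (Hgl Y)
      = ι ⁅Hgl Y, Xij s.1 s.2⁆ := by rw [LieHom.map_lie, Ring.lie_def]
  have h2 : ι ((∑ k : Fin n, (Y k s.1 • Xij k s.2 + Y k s.2 • Xij s.1 k)))
      = ∑ k : Fin n, (Y k s.1 • ι (Xij k s.2) + Y k s.2 • ι (Xij s.1 k)) := by
    rw [← LieHom.coe_toLinearMap, map_sum]
    refine Finset.sum_congr rfl fun k _ => ?_
    rw [map_add, _root_.map_smul, _root_.map_smul]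
  have h3 : dY Y (MvPolynomial.X s)
      = ∑ k : Fin n, (MvPolynomial.C (Y k s.1) * MvPolynomial.X (k, s.2)
          + MvPolynomial.C (Y k s.2) * MvPolynomial.X (s.1, k)) := by
    simp [dY, MvPolynomial.mkDerivation_X]
  rw [h1, bracket_Hgl_Xij, h2, h3, map_sum]
  refine Finset.sum_congr rfl fun k _ => ?_
  rw [map_add, _root_.map_mul, _root_.map_mul, phi_C, phi_C, phi_X, phi_X, ← Algebra.smul_def,
    ← Algebra.smul_def]

lemma comm_phi {n : ℕ} (Y : Matrix (Fin n) (Fin n) ℂ) (p : MvPolynomial (Fin n × Fin n) ℂ) :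
    ι (Hgl Y) * phi n p - phi n p * ι (Hgl Y) = phi n (dY Y p) := by
  induction p using MvPolynomial.induction_on with
  | C a =>
      rw [← MvPolynomial.algebraMap_eq, Derivation.map_algebraMap, map_zero, AlgHom.commutes,
        Algebra.commutes, sub_self]
  | add p q hp hq =>
      rw [map_add, map_add, map_add, mul_add, add_mul, ← hp, ← hq]
      abel
  | mul_X p s hp =>
      have key : ∀ a b c : UniversalEnvelopingAlgebra ℂ (sp n),
          c * (a * b) - a * b * c = (c * a - a * c) * b + a * (c * b - b * c) := by
        intros; noncomm_ring
      rw [_root_.map_mul, key, hp, phi_base Y s, ← _root_.map_mul, ← _root_.map_mul, ← map_add]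
      congr 1
      rw [Derivation.leibniz, smul_eq_mul, smul_eq_mul]
      ring


/-- For every `X ∈ gl(n,ℂ)`, `H_X M̂₊ − M̂₊ H_X = 2 Tr(X) M̂₊` in `U(sp(2n,ℂ))`. -/
theorem commutator_HX_Mplus (n : ℕ) (hn : 0 < n) (X : Matrix (Fin n) (Fin n) ℂ) :
    ι (Hgl X) * Mplus n - Mplus n * ι (Hgl X) = (2 * X.trace) • Mplus n := by
  have h := comm_phi X (Vm n).det
  rw [phi_Mplus] at h
  rw [h, det_dY, _root_.map_smul, phi_Mplus]

end
end

section
/- Let g = sp(2n,C), let u⁻ be the abelian subalgebra of strictly lower-left block matrices {(0 0; X 0) : X ∈ sym²_n(C)}, and let g_S ≅ sl(n,C) embedded as {(X₀ 0; 0 −X₀ᵀ) : X₀ ∈ sl(n,C)}. Then the algebra of g_S-invariants in the symmetric algebra S(u⁻) (equivalently U(u⁻), since u⁻ is abelian) under the adjoint action is the polynomial algebra C[M₋], where M₋ = det of the n×n matrix with (i,j) entry e_{n+i,j} + e_{n+j,i}. -/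
open Matrix

noncomputable section

/-- Every symmetric complex matrix is congruent to a diagonal matrix. -/
private lemma exists_congr_diagonal {n : ℕ} (X : Matrix (Fin n) (Fin n) ℂ) (hX : X.IsSymm) :
    ∃ (Q : Matrix (Fin n) (Fin n) ℂ) (δ : Fin n → ℂ),
      IsUnit Q.det ∧ X = Qᵀ * Matrix.diagonal δ * Q := by
  haveI : Invertible (2 : ℂ) := invertibleOfNonzero two_ne_zero
  set B : LinearMap.BilinForm ℂ (Fin n → ℂ) := Matrix.toLinearMap₂' ℂ X with hBdef
  have hB : B.IsSymm := by
    rw [LinearMap.BilinForm.isSymm_def]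
    intro x y
    simp only [RingHom.id_apply, hBdef, Matrix.toLinearMap₂'_apply]
    rw [Finset.sum_comm]
    refine Finset.sum_congr rfl fun i _ => Finset.sum_congr rfl fun j _ => ?_
    rw [smul_comm, ← hX.apply i j]
  obtain ⟨v₀, hv₀⟩ := LinearMap.BilinForm.exists_orthogonal_basis (LinearMap.BilinForm.isSymm_iff.1 hB)
  let v := v₀.reindex (finCongr (Module.finrank_fin_fun (R := ℂ)))
  have hcoe : ⇑v = ⇑v₀ ∘ ⇑(finCongr (Module.finrank_fin_fun (R := ℂ))).symm :=
    funext fun k => v₀.reindex_apply _ _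
  have hv : B.IsOrthoᵢ ⇑v := by
    rw [hcoe]
    intro i j hij
    exact hv₀ ((Equiv.injective _).ne hij)
  let e := Pi.basisFun ℂ (Fin n)
  let P := e.toMatrix v
  haveI : Invertible P := e.invertibleToMatrix v
  have hPd : IsUnit P.det := P.isUnit_det_of_invertible
  have hXB : LinearMap.toMatrix₂ e e B = X := by
    rw [LinearMap.toMatrix₂_basisFun, LinearMap.toMatrix'_toLinearMap₂']
  have hdiag : LinearMap.toMatrix₂ v v B = Matrix.diagonal (fun i => B (v i) (v i)) := by
    ext i j
    rcases eq_or_ne i j with rfl | hij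
    · simp [LinearMap.toMatrix₂_apply]
    · rw [LinearMap.toMatrix₂_apply, Matrix.diagonal_apply_ne _ hij]
      exact hv hij
  have key : Pᵀ * X * P = Matrix.diagonal (fun i => B (v i) (v i)) := by
    rw [← hXB, LinearMap.toMatrix₂_mul_basis_toMatrix, hdiag]
  refine ⟨P⁻¹, fun i => B (v i) (v i), ?_, ?_⟩
  · rw [Matrix.det_nonsing_inv]
    simpa using hPd
  · rw [← key, Matrix.transpose_nonsing_inv]
    rw [Matrix.mul_assoc, Matrix.mul_assoc, Matrix.mul_nonsing_inv _ hPd, Matrix.mul_one,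
      ← Matrix.mul_assoc, Matrix.nonsing_inv_mul _ (by simpa using hPd), Matrix.one_mul]

/-- Every invertible symmetric complex matrix is `SL`-congruent to
`diag(det X, 1, …, 1)`. -/
private lemma exists_sl_congr {n : ℕ} (hn : 0 < n) (X : Matrix (Fin n) (Fin n) ℂ)
    (hX : X.IsSymm) (hd : X.det ≠ 0) :
    ∃ g : Matrix (Fin n) (Fin n) ℂ, g.det = 1 ∧
      X = g * Matrix.diagonal (fun i => if i = (⟨0, hn⟩ : Fin n) then X.det else 1) * gᵀ := by
  obtain ⟨Q, δ, hQ, hXQ⟩ := exists_congr_diagonal X hX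
  set i₀ : Fin n := ⟨0, hn⟩
  set Df : Fin n → ℂ := fun i => if i = i₀ then X.det else 1 with hDf
  have hDfne : ∀ i, Df i ≠ 0 := by
    intro i
    simp only [hDf]
    split <;> simp [hd]
  have hdetD : (Matrix.diagonal Df).det = X.det := by
    rw [Matrix.det_diagonal, hDf]
    simp [Finset.prod_ite_eq']
  have hsq : ∀ i, ∃ w : ℂ, w ^ 2 = δ i / Df i := fun i =>
    IsAlgClosed.exists_pow_nat_eq _ (by norm_num : (0:ℕ) < 2)
  choose c hc using hsq
  have hSDS : Matrix.diagonal c * Matrix.diagonal Df * Matrix.diagonal c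
      = Matrix.diagonal δ := by
    rw [Matrix.diagonal_mul_diagonal, Matrix.diagonal_mul_diagonal]
    ext i j
    rcases eq_or_ne i j with rfl | hij
    · simp only [Matrix.diagonal_apply_eq]
      have h2 := hc i
      rw [eq_div_iff (hDfne i)] at h2
      linear_combination h2
    · simp [Matrix.diagonal_apply_ne _ hij]
  set g₀ := Qᵀ * Matrix.diagonal c with hg₀
  have hXg₀ : X = g₀ * Matrix.diagonal Df * g₀ᵀ := by
    rw [hg₀, Matrix.transpose_mul, Matrix.transpose_transpose, Matrix.diagonal_transpose]
    calc X = Qᵀ * Matrix.diagonal δ * Q := hXQ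
    _ = Qᵀ * (Matrix.diagonal c * Matrix.diagonal Df * Matrix.diagonal c) * Q := by rw [hSDS]
    _ = Qᵀ * Matrix.diagonal c * Matrix.diagonal Df * (Matrix.diagonal c * Q) := by
        simp only [Matrix.mul_assoc]
  have hdetg₀ : g₀.det ^ 2 = 1 := by
    have h1 : X.det = g₀.det ^ 2 * X.det := by
      conv_lhs => rw [hXg₀]
      rw [Matrix.det_mul, Matrix.det_mul, Matrix.det_transpose, hdetD]
      ring
    exact mul_right_cancel₀ hd (by rw [one_mul]; exact h1.symm)
  set ε := g₀.det with hε
  set E := Matrix.diagonal (fun i => if i = i₀ then ε else 1) with hE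
  have hdetE : E.det = ε := by
    rw [hE, Matrix.det_diagonal]
    simp [Finset.prod_ite_eq']
  refine ⟨g₀ * E, ?_, ?_⟩
  · rw [Matrix.det_mul, hdetE, ← hε, ← sq, hdetg₀]
  · have hEDE : E * Matrix.diagonal Df * Eᵀ = Matrix.diagonal Df := by
      rw [hE, Matrix.diagonal_transpose, Matrix.diagonal_mul_diagonal,
        Matrix.diagonal_mul_diagonal]
      ext i j
      rcases eq_or_ne i j with rfl | hij
      · simp only [Matrix.diagonal_apply_eq]
        split_ifs with h
        · have hee : ε * ε = 1 := by rw [← sq]; exact hdetg₀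
          linear_combination Df i * hee
        · ring
      · simp [Matrix.diagonal_apply_ne _ hij]
    rw [Matrix.transpose_mul, ← Matrix.mul_assoc, Matrix.mul_assoc (g₀ * E),
      Matrix.mul_assoc g₀, ← Matrix.mul_assoc E]
    rw [hEDE]
    exact hXg₀

/-- Evaluation of an `MvPolynomial`-substituted multivariate polynomial. -/
private lemma eval_eval₂_mv {σ : Type*} (x : σ → ℂ)
    (g : σ → MvPolynomial σ ℂ) (p : MvPolynomial σ ℂ) :
    MvPolynomial.eval x (MvPolynomial.eval₂ MvPolynomial.C g p)
      = MvPolynomial.eval (fun v => MvPolynomial.eval x (g v)) p := by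
  rw [show (MvPolynomial.eval x (MvPolynomial.eval₂ MvPolynomial.C g p))
      = (MvPolynomial.eval x : MvPolynomial σ ℂ →+* ℂ) (MvPolynomial.eval₂ MvPolynomial.C g p)
      from rfl,
    MvPolynomial.eval₂_comp_left (MvPolynomial.eval x) MvPolynomial.C g p]
  have h : (MvPolynomial.eval x).comp (MvPolynomial.C : ℂ →+* MvPolynomial σ ℂ)
      = RingHom.id ℂ := RingHom.ext fun r => MvPolynomial.eval_C _
  rw [h]
  rfl

/-- Evaluation of a `Polynomial`-substituted multivariate polynomial. -/
private lemma eval_eval₂_poly {σ : Type*} (d : ℂ)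
    (g : σ → Polynomial ℂ) (p : MvPolynomial σ ℂ) :
    Polynomial.eval d (MvPolynomial.eval₂ Polynomial.C g p)
      = MvPolynomial.eval (fun v => Polynomial.eval d (g v)) p := by
  rw [show (Polynomial.eval d (MvPolynomial.eval₂ Polynomial.C g p))
      = (Polynomial.evalRingHom d) (MvPolynomial.eval₂ Polynomial.C g p) from rfl,
    MvPolynomial.eval₂_comp_left (Polynomial.evalRingHom d) Polynomial.C g p]
  have h : (Polynomial.evalRingHom d).comp (Polynomial.C : ℂ →+* Polynomial ℂ)
      = RingHom.id ℂ := RingHom.ext fun r => Polynomial.eval_C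
  rw [h]
  rfl

/-- Evaluation of a univariate polynomial substituted with a multivariate polynomial. -/
private lemma eval_eval₂_comp {σ : Type*} (x : σ → ℂ)
    (m : MvPolynomial σ ℂ) (q : Polynomial ℂ) :
    MvPolynomial.eval x (Polynomial.eval₂ MvPolynomial.C m q)
      = Polynomial.eval (MvPolynomial.eval x m) q := by
  rw [show (MvPolynomial.eval x (Polynomial.eval₂ MvPolynomial.C m q))
      = (MvPolynomial.eval x : MvPolynomial σ ℂ →+* ℂ) (Polynomial.eval₂ MvPolynomial.C m q)
      from rfl,
    Polynomial.hom_eval₂]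
  have h : (MvPolynomial.eval x).comp (MvPolynomial.C : ℂ →+* MvPolynomial σ ℂ)
      = RingHom.id ℂ := RingHom.ext fun r => MvPolynomial.eval_C _
  rw [h]
  rfl

/-- a polynomial function on the space of symmetric `n×n` complex matrices:
one given by evaluating a multivariate polynomial in the matrix entries. -/
def IsPolyFun (n : ℕ) (f : {X : Matrix (Fin n) (Fin n) ℂ // X.IsSymm} → ℂ) : Prop :=
  ∃ p : MvPolynomial (Fin n × Fin n) ℂ,
    ∀ X, f X = MvPolynomial.eval (fun q => X.1 q.1 q.2) p

/-- the algebra of `g_S ≅ sl(n,ℂ)`-invariants in `S(u⁻)` — realized as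
the algebra of polynomial functions on the symmetric matrices (identified with `u⁻`)
invariant under the action of `SL_n(ℂ)` — is the polynomial algebra `ℂ[M₋]` generated
by the determinant. -/
theorem invariants_of_unm (n : ℕ) (hn : 0 < n) :
    {f : {X : Matrix (Fin n) (Fin n) ℂ // X.IsSymm} → ℂ |
        IsPolyFun n f ∧
        ∀ (g : Matrix (Fin n) (Fin n) ℂ) (hg : g.det = 1)
          (X : {X : Matrix (Fin n) (Fin n) ℂ // X.IsSymm}),
          f ⟨g * X.1 * gᵀ, by
            simp only [Matrix.IsSymm, Matrix.transpose_mul, Matrix.transpose_transpose,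
              Matrix.mul_assoc]
            rw [X.2]⟩ = f X}
      = {f | ∃ q : Polynomial ℂ, ∀ X, f X = q.eval X.1.det} := by
  classical
  -- the determinant as a multivariate polynomial in the entries
  set detMv : MvPolynomial (Fin n × Fin n) ℂ :=
    (Matrix.of fun i j => MvPolynomial.X (i, j)).det with hdetMv
  have hdetMv_eval : ∀ x : (Fin n × Fin n) → ℂ,
      MvPolynomial.eval x detMv = (Matrix.of fun i j => x (i, j)).det := by
    intro x
    rw [hdetMv, RingHom.map_det]
    congr 1
    ext i j
    simp [Matrix.map_apply]
  ext f
  simp only [Set.mem_setOf_eq]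
  constructor
  · rintro ⟨⟨p, hp⟩, hinv⟩
    set i₀ : Fin n := ⟨0, hn⟩ with hi₀
    set Dm : ℂ → Matrix (Fin n) (Fin n) ℂ :=
      fun d => Matrix.diagonal (fun i => if i = i₀ then d else 1) with hDm
    have hDmsymm : ∀ d, (Dm d).IsSymm := fun d => Matrix.isSymm_diagonal _
    have hDmdet : ∀ d, (Dm d).det = d := by
      intro d
      rw [hDm]
      simp [Matrix.det_diagonal, Finset.prod_ite_eq']
    -- the candidate univariate polynomial
    set gent : Fin n × Fin n → Polynomial ℂ := fun ij =>
      if ij.1 = ij.2 then (if ij.1 = i₀ then Polynomial.X else 1) else 0 with hgent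
    set q₀ : Polynomial ℂ := MvPolynomial.eval₂ Polynomial.C gent p with hq₀
    have hq₀eval : ∀ d : ℂ, q₀.eval d = f ⟨Dm d, hDmsymm d⟩ := by
      intro d
      rw [hq₀, eval_eval₂_poly, hp ⟨Dm d, hDmsymm d⟩]
      have harg : (fun v : Fin n × Fin n => Polynomial.eval d (gent v))
          = fun v : Fin n × Fin n => (Dm d) v.1 v.2 := by
        funext v
        rw [hgent, hDm]
        simp only [Matrix.diagonal_apply]
        split_ifs <;> simp
      rw [harg]
    -- key: for invertible symmetric X, f X = q₀ (det X)
    have hkey : ∀ X : {X : Matrix (Fin n) (Fin n) ℂ // X.IsSymm},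
        X.1.det ≠ 0 → f X = q₀.eval X.1.det := by
      intro X hdX
      obtain ⟨g, hg1, hgX⟩ := exists_sl_congr hn X.1 X.2 hdX
      have h2 : X = ⟨g * Dm X.1.det * gᵀ, by
          simp only [Matrix.IsSymm, Matrix.transpose_mul, Matrix.transpose_transpose,
            Matrix.mul_assoc]
          rw [(hDmsymm X.1.det)]⟩ := by
        apply Subtype.ext
        simpa [hDm, hi₀] using hgX
      rw [hq₀eval]
      conv_lhs => rw [h2]
      exact hinv g hg1 ⟨Dm X.1.det, hDmsymm _⟩
    -- globalize by Zariski density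
    set symg : Fin n × Fin n → MvPolynomial (Fin n × Fin n) ℂ := fun ij =>
      MvPolynomial.C (2⁻¹ : ℂ) * (MvPolynomial.X ij + MvPolynomial.X (ij.2, ij.1)) with hsymg
    set Ψp : MvPolynomial (Fin n × Fin n) ℂ := MvPolynomial.eval₂ MvPolynomial.C symg p with hΨp
    set cdet : MvPolynomial (Fin n × Fin n) ℂ :=
      MvPolynomial.eval₂ MvPolynomial.C symg detMv with hcdet
    set compq : MvPolynomial (Fin n × Fin n) ℂ :=
      Polynomial.eval₂ MvPolynomial.C cdet q₀ with hcompq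
    -- the symmetrized matrix of a point
    have hsymval : ∀ (x : (Fin n × Fin n) → ℂ) (v : Fin n × Fin n),
        MvPolynomial.eval x (symg v) = 2⁻¹ * (x v + x (v.2, v.1)) := by
      intro x v
      rw [hsymg]
      simp
    have hS : ∀ x : (Fin n × Fin n) → ℂ,
        (Matrix.of fun i j => MvPolynomial.eval x (symg (i, j))).IsSymm := by
      intro x
      ext i j
      rw [Matrix.transpose_apply, Matrix.of_apply, Matrix.of_apply, hsymval, hsymval]
      ring
    have hΨp_eval : ∀ x : (Fin n × Fin n) → ℂ,
        MvPolynomial.eval x Ψp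
          = f ⟨Matrix.of fun i j => MvPolynomial.eval x (symg (i, j)), hS x⟩ := by
      intro x
      rw [hΨp, eval_eval₂_mv, hp]
      rfl
    have hcdet_eval : ∀ x : (Fin n × Fin n) → ℂ,
        MvPolynomial.eval x cdet
          = (Matrix.of fun i j => MvPolynomial.eval x (symg (i, j))).det := by
      intro x
      rw [hcdet, eval_eval₂_mv, hdetMv_eval]
    have hcompq_eval : ∀ x : (Fin n × Fin n) → ℂ,
        MvPolynomial.eval x compq = q₀.eval (MvPolynomial.eval x cdet) := by
      intro x
      rw [hcompq, eval_eval₂_comp]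
    have hzero : (Ψp - compq) * cdet = 0 := by
      apply MvPolynomial.funext
      intro x
      rw [_root_.map_mul, map_sub, map_zero]
      rcases eq_or_ne (MvPolynomial.eval x cdet) 0 with h | h
      · rw [h, mul_zero]
      · have := hkey ⟨Matrix.of fun i j => MvPolynomial.eval x (symg (i, j)), hS x⟩
          (by rwa [← hcdet_eval x])
        rw [hΨp_eval, hcompq_eval, hcdet_eval x] at *
        rw [this, sub_self, zero_mul]
    have hcdet_ne : cdet ≠ 0 := by
      intro h
      have := hcdet_eval (fun v => if v.1 = v.2 then 1 else 0)
      rw [h, map_zero] at this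
      have h1 : (Matrix.of fun i j : Fin n =>
          MvPolynomial.eval (fun v : Fin n × Fin n => if v.1 = v.2 then (1:ℂ) else 0)
            (symg (i, j))) = (1 : Matrix (Fin n) (Fin n) ℂ) := by
        ext i j
        rw [Matrix.of_apply, hsymval]
        rcases eq_or_ne i j with rfl | hij
        · norm_num [Matrix.one_apply_eq]
        · simp [hij, (Ne.symm hij), Matrix.one_apply_ne hij]
      rw [h1, Matrix.det_one] at this
      exact one_ne_zero this.symm
    have hfactor : Ψp - compq = 0 := by
      rcases mul_eq_zero.mp hzero with h | h
      · exact h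
      · exact absurd h hcdet_ne
    have hΨeq : Ψp = compq := by
      have := sub_eq_zero.mp hfactor
      exact this
    refine ⟨q₀, fun X => ?_⟩
    set x : (Fin n × Fin n) → ℂ := fun v => X.1 v.1 v.2 with hx
    have hXfix : (Matrix.of fun i j => MvPolynomial.eval x (symg (i, j))) = X.1 := by
      ext i j
      rw [Matrix.of_apply, hsymval]
      have := X.2.apply i j
      simp only [hx]
      rw [show X.1 ((i, j).2, (i, j).1).1 ((i, j).2, (i, j).1).2 = X.1 j i from rfl]
      rw [this]
      ring
    have e1 : MvPolynomial.eval x Ψp = f X := by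
      rw [hΨp_eval]
      congr 1
      exact Subtype.ext hXfix
    have e2 : MvPolynomial.eval x compq = q₀.eval X.1.det := by
      rw [hcompq_eval, hcdet_eval, hXfix]
    rw [← e1, hΨeq, e2]
  · rintro ⟨q, hq⟩
    constructor
    · refine ⟨Polynomial.eval₂ MvPolynomial.C detMv q, fun X => ?_⟩
      rw [hq, eval_eval₂_comp, hdetMv_eval]
      rfl
    · intro g hg X
      rw [hq, hq]
      congr 1
      simp [Matrix.det_mul, Matrix.det_transpose, hg]
end
end
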